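/- arXiv:1506.00284 — 6 statements merged into one kernel-verified Lean document; each statement's English description precedes it below -/
import Mathlib

section
/- The sequence h_n(a,b,c,d) defined by h_0 = 1, h_1 = (a+b-c^{-1}-d^{-1})/(c^{-1}d^{-1}-ab), and the three-term recursion (t^{n-1}ab - c^{-1}d^{-1}) h_n + (t^{n-1}(a+b) - (c^{-1}+d^{-1})) h_{n-1} + (t^{n-1} - 1) h_{n-2} = 0 satisfies the duality relation h_n(a,b,c,d | t) = h_n(c^{-1}, d^{-1}, a^{-1}, b^{-1} | t^{-1}). -/
/-- The sequence `h n` defined by `h 0 = 1`,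
`h 1 = (a+b-c⁻¹-d⁻¹)/(c⁻¹d⁻¹-ab)` and the three-term recursion
`(t^(n-1)ab - c⁻¹d⁻¹) h n + (t^(n-1)(a+b) - (c⁻¹+d⁻¹)) h (n-1) + (t^(n-1)-1) h (n-2) = 0`
satisfies the duality `h_n(a,b,c,d|t) = h_n(c⁻¹,d⁻¹,a⁻¹,b⁻¹|t⁻¹)`.
Here `h` is the sequence with parameters `(a,b,c,d,t)` and `h'` the one with
parameters `(c⁻¹,d⁻¹,a⁻¹,b⁻¹,t⁻¹)`. -/
theorem statement0 {F : Type*} [Field F] (t a b c d : F)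
    (ht : t ≠ 0) (ha : a ≠ 0) (hb : b ≠ 0) (hc : c ≠ 0) (hd : d ≠ 0)
    (hden : ∀ n : ℕ, 1 ≤ n → t ^ (n - 1) * a * b - c⁻¹ * d⁻¹ ≠ 0)
    (hden' : ∀ n : ℕ, 1 ≤ n → (t⁻¹) ^ (n - 1) * c⁻¹ * d⁻¹ - (a⁻¹)⁻¹ * (b⁻¹)⁻¹ ≠ 0)
    (h h' : ℕ → F)
    (h0 : h 0 = 1)
    (h1 : h 1 = (a + b - c⁻¹ - d⁻¹) / (c⁻¹ * d⁻¹ - a * b))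
    (hrec : ∀ n : ℕ, 2 ≤ n →
      (t ^ (n - 1) * a * b - c⁻¹ * d⁻¹) * h n
        + (t ^ (n - 1) * (a + b) - (c⁻¹ + d⁻¹)) * h (n - 1)
        + (t ^ (n - 1) - 1) * h (n - 2) = 0)
    (h0' : h' 0 = 1)
    (h1' : h' 1 = (c⁻¹ + d⁻¹ - (a⁻¹)⁻¹ - (b⁻¹)⁻¹) / ((a⁻¹)⁻¹ * (b⁻¹)⁻¹ - c⁻¹ * d⁻¹))
    (hrec' : ∀ n : ℕ, 2 ≤ n →
      ((t⁻¹) ^ (n - 1) * c⁻¹ * d⁻¹ - (a⁻¹)⁻¹ * (b⁻¹)⁻¹) * h' n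
        + ((t⁻¹) ^ (n - 1) * (c⁻¹ + d⁻¹) - ((a⁻¹)⁻¹ + (b⁻¹)⁻¹)) * h' (n - 1)
        + ((t⁻¹) ^ (n - 1) - 1) * h' (n - 2) = 0) :
    ∀ n : ℕ, h n = h' n := by
  intro n
  induction n using Nat.strong_induction_on with
  | _ n ih =>
    match n, ih with
    | 0, _ => rw [h0, h0']
    | 1, _ =>
      rw [h1, h1', inv_inv, inv_inv]
      rw [show c⁻¹ + d⁻¹ - a - b = -(a + b - c⁻¹ - d⁻¹) by ring,
        show a * b - c⁻¹ * d⁻¹ = -(c⁻¹ * d⁻¹ - a * b) by ring, neg_div_neg_eq]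
    | (m+2), ih =>
      have i1 : h (m+1) = h' (m+1) := ih (m+1) (by omega)
      have i2 : h m = h' m := ih m (by omega)
      have e1 := hrec (m+2) (by omega)
      have e2 := hrec' (m+2) (by omega)
      simp only [Nat.add_sub_cancel, show m+2-1 = m+1 from rfl, show m+2-2 = m from rfl, inv_inv, inv_pow] at e1 e2
      rw [i1, i2] at e1
      have hs : t ^ (m+1) ≠ 0 := pow_ne_zero _ ht
      have hdn := hden (m+2) (by omega)
      have key : (t ^ (m+1) * a * b - c⁻¹ * d⁻¹) * (h (m+2) - h' (m+2)) = 0 := by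
        have hss : t ^ (m+1) * (t ^ (m+1))⁻¹ = 1 := mul_inv_cancel₀ hs
        linear_combination e1 + t ^ (m+1) * e2 -
          (c⁻¹ * d⁻¹ * h' (m+2) + (c⁻¹ + d⁻¹) * h' (m+1) + h' m) * hss
      have := mul_eq_zero.mp key
      rcases this with hbad | hz
      · exact absurd hbad hdn
      · exact sub_eq_zero.mp hz
end

section
/- The explicit expression h_n(a,b,c,d) = (1/(abcd;t)_n) · Σ_{0 ≤ i,j,k, i+j+k ≤ n} [n choose i,j,k]_t · t^{C(i,2)+C(j,2)} · a^i b^j (-c)^{n-k} (-d)^{i+j+k} satisfies the three-term recursion (t^{n-1}ab - c^{-1}d^{-1}) h_n + (t^{n-1}(a+b) - (c^{-1}+d^{-1})) h_{n-1} + (t^{n-1} - 1) h_{n-2} = 0 with initial condition h_0 = 1. -/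
open Finset

noncomputable section

/-- The t-Pochhammer symbol `(x;t)_n = ∏_{i=0}^{n-1} (1 - x t^i)`. -/
def tpoch {F : Type*} [Field F] (t x : F) (n : ℕ) : F :=
  ∏ i ∈ Finset.range n, (1 - x * t ^ i)

/-- The explicit expression
`h_n(a,b,c,d) = (abcd;t)_n⁻¹ Σ_{0≤i,j,k, i+j+k≤n} [n choose i,j,k]_t
  t^(C(i,2)+C(j,2)) a^i b^j (-c)^(n-k) (-d)^(i+j+k)`,
with `[n choose i,j,k]_t = (t;t)_n / ((t;t)_i (t;t)_j (t;t)_k (t;t)_{n-i-j-k})`. -/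
def hExp {F : Type*} [Field F] (t a b c d : F) (n : ℕ) : F :=
  (tpoch t (a * b * c * d) n)⁻¹ *
    ∑ i ∈ Finset.range (n + 1), ∑ j ∈ Finset.range (n + 1), ∑ k ∈ Finset.range (n + 1),
      if i + j + k ≤ n then
        (tpoch t t n / (tpoch t t i * tpoch t t j * tpoch t t k * tpoch t t (n - i - j - k)))
          * t ^ (Nat.choose i 2 + Nat.choose j 2)
          * a ^ i * b ^ j * (-c) ^ (n - k) * (-d) ^ (i + j + k)
      else 0

/-!
Splitting `[n choose i,j,k]_t` into three Gaussian binomials exhibits the numerator of `h_n` as an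
iterated `t`-binomial convolution: the `t`-exponential coefficients `t^(i choose 2) (acd)ⁱ` and
`t^(j choose 2) (bcd)ʲ` convolved with the Rogers–Szegő polynomials `H_n` in `-d, -c`.
These satisfy `H_{n+1} = (c + d) H_n - (1 - tⁿ) cd H_{n-1}`, and by the `t`-Pascal rule and the
absorption identity, convolving a sequence with `u_{n+1} = (x tⁿ + p) u_n + (1 - tⁿ) w u_{n-1}`
against `t^(i choose 2) yⁱ` gives a sequence of the same shape with `x ↦ x + y` and
`w ↦ w + x y t^(n-1)`. Two convolutions give a three-term recursion for the numerator, and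
dividing by `(abcd;t)_n` turns it into the stated one.
-/

section Development

variable {F : Type*} [Field F]

theorem tpoch_zero (t x : F) : tpoch t x 0 = 1 :=
  prod_range_zero _

theorem tpoch_succ (t x : F) (n : ℕ) : tpoch t x (n + 1) = tpoch t x n * (1 - x * t ^ n) :=
  prod_range_succ _ _

theorem tpoch_self_succ (t : F) (n : ℕ) :
    tpoch t t (n + 1) = tpoch t t n * (1 - t ^ (n + 1)) := by
  rw [tpoch_succ, ← pow_succ']

theorem one_sub_mul_pow_ne_zero {t x : F} {n : ℕ} (h : tpoch t x (n + 1) ≠ 0) :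
    1 - x * t ^ n ≠ 0 := by
  rw [tpoch_succ] at h
  exact right_ne_zero_of_mul h

/-- The Gaussian binomial coefficient `[i + j choose i]_t`, indexed by the two parts so that no
truncated subtraction occurs. -/
def qBinom (t : F) (i j : ℕ) : F :=
  tpoch t t (i + j) / (tpoch t t i * tpoch t t j)

theorem qBinom_comm (t : F) (i j : ℕ) : qBinom t i j = qBinom t j i := by
  rw [qBinom, qBinom, add_comm, mul_comm]

section QBinom

variable {t : F} (htt : ∀ m, tpoch t t m ≠ 0)
include htt

theorem one_sub_pow_succ_ne_zero (n : ℕ) : 1 - t ^ (n + 1) ≠ 0 := by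
  simpa only [pow_succ'] using one_sub_mul_pow_ne_zero (htt (n + 1))

theorem qBinom_zero_left (j : ℕ) : qBinom t 0 j = 1 := by
  rw [qBinom, zero_add, tpoch_zero, one_mul, div_self (htt j)]

theorem qBinom_zero_right (i : ℕ) : qBinom t i 0 = 1 := by
  rw [qBinom_comm, qBinom_zero_left htt]

theorem qBinom_succ_succ (i j : ℕ) :
    qBinom t (i + 1) (j + 1) = qBinom t (i + 1) j + t ^ (j + 1) * qBinom t i (j + 1) := by
  simp only [qBinom, show i + 1 + (j + 1) = i + j + 1 + 1 by omega,
    show i + 1 + j = i + j + 1 by omega, show i + (j + 1) = i + j + 1 by omega,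
    tpoch_self_succ t (i + j + 1), tpoch_self_succ t i, tpoch_self_succ t j]
  have := htt i; have := htt j; have := htt (i + j + 1)
  have := one_sub_pow_succ_ne_zero htt i; have := one_sub_pow_succ_ne_zero htt j
  field_simp
  ring

theorem one_sub_pow_mul_qBinom_succ_right (i j : ℕ) :
    (1 - t ^ (j + 1)) * qBinom t i (j + 1) = (1 - t ^ (i + j + 1)) * qBinom t i j := by
  simp only [qBinom, ← add_assoc, tpoch_self_succ t (i + j), tpoch_self_succ t j]
  have := htt i; have := htt j; have := one_sub_pow_succ_ne_zero htt j
  field_simp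

end QBinom

/-- Coefficients of the product of the `t`-exponential generating functions `∑ f i zⁱ/(t;t)_i`
and `∑ u j zʲ/(t;t)_j`. -/
def qConv (t : F) (f u : ℕ → F) (n : ℕ) : F :=
  ∑ p ∈ antidiagonal n, qBinom t p.1 p.2 * f p.1 * u p.2

section QConv

open Finset.Nat

variable {t : F}

theorem qConv_comm (f u : ℕ → F) (n : ℕ) : qConv t f u n = qConv t u f n := by
  rw [qConv, qConv, ← sum_antidiagonal_swap]
  exact sum_congr rfl fun p _ => by rw [Prod.fst_swap, Prod.snd_swap, qBinom_comm]; ring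

theorem qConv_mul_left (k : F) (f u : ℕ → F) (n : ℕ) :
    qConv t (fun i => k * f i) u n = k * qConv t f u n := by
  rw [qConv, qConv, mul_sum]
  exact sum_congr rfl fun _ _ => by ring

theorem qConv_mul_right (k : F) (f u : ℕ → F) (n : ℕ) :
    qConv t f (fun j => k * u j) n = k * qConv t f u n := by
  rw [qConv_comm, qConv_mul_left, qConv_comm]

theorem qConv_pow_mul_pow (f u : ℕ → F) (n : ℕ) :
    qConv t (fun i => t ^ i * f i) (fun j => t ^ j * u j) n = t ^ n * qConv t f u n := by
  rw [qConv, qConv, mul_sum]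
  refine sum_congr rfl fun p hp => ?_
  rw [← mem_antidiagonal.mp hp, pow_add]
  ring

theorem qConv_eq_sum_range (f u : ℕ → F) (n : ℕ) :
    qConv t f u n = ∑ i ∈ range (n + 1), qBinom t i (n - i) * f i * u (n - i) :=
  sum_antidiagonal_eq_sum_range_succ (fun i j => qBinom t i j * f i * u j) n

variable (htt : ∀ m, tpoch t t m ≠ 0)
include htt

theorem qConv_succ (f u : ℕ → F) (n : ℕ) :
    qConv t f u (n + 1)
      = qConv t f (fun j => u (j + 1)) n
        + qConv t (fun i => f (i + 1)) (fun j => t ^ j * u j) n := by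
  cases n with
  | zero => simp [qConv, sum_antidiagonal_succ, qBinom_zero_left htt, qBinom_zero_right htt]
  | succ m =>
    rw [qConv, sum_antidiagonal_succ, sum_antidiagonal_succ', qConv, sum_antidiagonal_succ, qConv,
      sum_antidiagonal_succ']
    simp only [qBinom_zero_left htt, qBinom_zero_right htt, qBinom_succ_succ htt]
    rw [add_add_add_comm, ← sum_add_distrib, ← add_assoc]
    congr 1
    · ring
    · exact sum_congr rfl fun _ _ => by ring

theorem qConv_one_sub_pow_mul (f u : ℕ → F) (n : ℕ) :
    qConv t f (fun j => (1 - t ^ j) * u j) n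
      = (1 - t ^ n) * qConv t f (fun j => u (j + 1)) (n - 1) := by
  cases n with
  | zero => simp [qConv]
  | succ m =>
    rw [qConv, sum_antidiagonal_succ', pow_zero, sub_self, zero_mul, mul_zero, zero_add,
      Nat.add_sub_cancel, qConv, mul_sum]
    refine sum_congr rfl fun p hp => ?_
    rw [← mem_antidiagonal.mp hp]
    linear_combination (f p.1 * u (p.2 + 1)) * one_sub_pow_mul_qBinom_succ_right htt p.1 p.2

end QConv

def rogersSzego (t c d : F) : ℕ → F :=
  qConv t (fun i => c ^ i) (fun j => d ^ j)

def qExpCoeff (t y : F) (i : ℕ) : F :=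
  t ^ i.choose 2 * y ^ i

theorem qExpCoeff_succ (t y : F) (i : ℕ) :
    qExpCoeff t y (i + 1) = y * (t ^ i * qExpCoeff t y i) := by
  rw [qExpCoeff, qExpCoeff, Nat.choose_succ_succ, Nat.choose_one_right, pow_add, pow_succ']
  ring

section Recursions

variable {t : F} (htt : ∀ m, tpoch t t m ≠ 0)
include htt

theorem rogersSzego_succ (c d : F) (n : ℕ) :
    rogersSzego t c d (n + 1)
      = (c + d) * rogersSzego t c d n - (1 - t ^ n) * (c * d) * rogersSzego t c d (n - 1) := by
  have hshift (m : ℕ) :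
      qConv t (fun i => c ^ i) (fun j => d ^ (j + 1)) m = d * rogersSzego t c d m := by
    simp only [pow_succ']
    exact qConv_mul_right d _ _ m
  calc rogersSzego t c d (n + 1)
      = d * rogersSzego t c d n + c * qConv t (fun i => c ^ i) (fun j => t ^ j * d ^ j) n := by
        rw [rogersSzego, qConv_succ htt, hshift]
        simp only [pow_succ']
        rw [qConv_mul_left]
        rfl
    _ = d * rogersSzego t c d n
          + c * (rogersSzego t c d n
            - qConv t (fun i => c ^ i) (fun j => (1 - t ^ j) * d ^ j) n) := by
        simp only [rogersSzego, qConv, ← sum_sub_distrib]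
        exact congrArg _ (congrArg _ (sum_congr rfl fun _ _ => by ring))
    _ = _ := by
        rw [qConv_one_sub_pow_mul htt, hshift]
        ring

theorem qConv_qExpCoeff_succ {x p w : F} (y : F) {u : ℕ → F}
    (hu : ∀ n, u (n + 1) = (x * t ^ n + p) * u n + (1 - t ^ n) * w * u (n - 1)) (n : ℕ) :
    qConv t (qExpCoeff t y) u (n + 1)
      = ((x + y) * t ^ n + p) * qConv t (qExpCoeff t y) u n
        + (1 - t ^ n) * (w + x * y * t ^ (n - 1)) * qConv t (qExpCoeff t y) u (n - 1) := by
  set g := qExpCoeff t y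
  set S := qConv t g u
  have hshift (m : ℕ) :
      qConv t (fun i => g (i + 1)) (fun j => t ^ j * u j) m = y * (t ^ m * S m) := by
    simp only [g, qExpCoeff_succ]
    rw [qConv_mul_left, qConv_pow_mul_pow]
  have hpow : qConv t g (fun j => t ^ j * u j) n
      = t ^ n * S n + (1 - t ^ n) * (y * (t ^ (n - 1) * S (n - 1))) := by
    calc qConv t g (fun j => t ^ j * u j) n
        = qConv t (fun i => t ^ i * g i) (fun j => t ^ j * u j) n
          + qConv t (fun j => t ^ j * u j) (fun i => (1 - t ^ i) * g i) n := by
          rw [qConv_comm (fun j => t ^ j * u j)]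
          simp only [qConv, ← sum_add_distrib]
          exact sum_congr rfl fun _ _ => by ring
      _ = _ := by
          rw [qConv_pow_mul_pow, qConv_one_sub_pow_mul htt, qConv_comm (fun j => t ^ j * u j),
            hshift]
  have hlag : qConv t g (fun j => (1 - t ^ j) * u (j - 1)) n = (1 - t ^ n) * S (n - 1) := by
    simp only [qConv_one_sub_pow_mul htt, Nat.add_sub_cancel, S]
  calc qConv t g u (n + 1)
      = qConv t g (fun j => u (j + 1)) n + y * (t ^ n * S n) := by rw [qConv_succ htt, hshift]
    _ = x * qConv t g (fun j => t ^ j * u j) n + p * S n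
          + w * qConv t g (fun j => (1 - t ^ j) * u (j - 1)) n + y * (t ^ n * S n) := by
        simp only [S, qConv, mul_sum, ← sum_add_distrib, hu]
        exact sum_congr rfl fun _ _ => by ring
    _ = _ := by
        rw [hpow, hlag]
        ring

end Recursions

theorem qMultinomial_eq_qBinom_mul {t : F} (htt : ∀ m, tpoch t t m ≠ 0) (i j k r : ℕ) :
    tpoch t t (i + j + k + r) / (tpoch t t i * tpoch t t j * tpoch t t k * tpoch t t r)
      = qBinom t i (j + k + r) * qBinom t j (k + r) * qBinom t k r := by
  rw [qBinom, qBinom, qBinom, show i + (j + k + r) = i + j + k + r by ring,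
    show j + (k + r) = j + k + r by ring]
  have := htt (j + k + r); have := htt (k + r)
  field_simp

def hExpNum (t a b c d : F) : ℕ → F :=
  qConv t (qExpCoeff t (a * c * d)) (qConv t (qExpCoeff t (b * c * d)) (rogersSzego t (-d) (-c)))

theorem hExp_eq_inv_mul_hExpNum {t : F} (htt : ∀ m, tpoch t t m ≠ 0) (a b c d : F) (n : ℕ) :
    hExp t a b c d n = (tpoch t (a * b * c * d) n)⁻¹ * hExpNum t a b c d n := by
  rw [hExp, hExpNum, qConv_eq_sum_range]
  refine congrArg _ (sum_congr rfl fun i hi => ?_)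
  rw [mem_range] at hi
  rw [eventually_constant_sum (N := n - i + 1)
      (fun j hj => sum_eq_zero fun k _ => if_neg (by omega)) (by omega),
    qConv_eq_sum_range, mul_sum]
  refine sum_congr rfl fun j hj => ?_
  rw [mem_range] at hj
  rw [eventually_constant_sum (N := n - i - j + 1) (fun k hk => if_neg (by omega)) (by omega),
    rogersSzego, qConv_eq_sum_range, mul_sum, mul_sum]
  refine sum_congr rfl fun k hk => ?_
  rw [mem_range] at hk
  rw [if_pos (by omega)]
  obtain ⟨r, rfl⟩ : ∃ r, n = i + j + k + r := ⟨n - i - j - k, by omega⟩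
  have hsign : (-c) ^ (i + j + r) * (-d) ^ (i + j + k)
      = (c * d) ^ i * (c * d) ^ j * ((-d) ^ k * (-c) ^ r) := by
    rw [show c * d = -c * -d by ring, mul_pow, mul_pow]
    ring
  simp only [show i + j + k + r - i = j + k + r by omega, show j + k + r - j = k + r by omega,
    show k + r - k = r by omega, show i + j + k + r - k = i + j + r by omega]
  rw [mul_assoc _ ((-c) ^ (i + j + r)), hsign, qMultinomial_eq_qBinom_mul htt]
  simp only [qExpCoeff, pow_add, mul_pow]
  ring

theorem hExpNum_succ {t : F} (htt : ∀ m, tpoch t t m ≠ 0) (a b c d : F) (n : ℕ) :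
    hExpNum t a b c d (n + 1) = ((a + b) * c * d * t ^ n - (c + d)) * hExpNum t a b c d n
      + (1 - t ^ n) * (a * b * c * d * t ^ (n - 1) - 1) * (c * d) * hExpNum t a b c d (n - 1) := by
  have hH (k : ℕ) : rogersSzego t (-d) (-c) (k + 1)
      = (0 * t ^ k + -(c + d)) * rogersSzego t (-d) (-c) k
        + (1 - t ^ k) * -(c * d) * rogersSzego t (-d) (-c) (k - 1) := by
    rw [rogersSzego_succ htt]
    ring
  have hT (k : ℕ) := qConv_qExpCoeff_succ htt (b * c * d) hH k
  simp only [zero_mul, zero_add, add_zero] at hT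
  rw [hExpNum, qConv_qExpCoeff_succ htt (a * c * d) hT]
  ring

end Development

theorem statement2_general {F : Type*} [Field F] (t a b c d : F)
    (hc : c ≠ 0) (hd : d ≠ 0)
    (htt : ∀ m : ℕ, tpoch t t m ≠ 0)
    (habcd : ∀ n : ℕ, tpoch t (a * b * c * d) n ≠ 0) :
    hExp t a b c d 0 = 1 ∧
      ∀ n : ℕ, 2 ≤ n →
        (t ^ (n - 1) * a * b - c⁻¹ * d⁻¹) * hExp t a b c d n
          + (t ^ (n - 1) * (a + b) - (c⁻¹ + d⁻¹)) * hExp t a b c d (n - 1)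
          + (t ^ (n - 1) - 1) * hExp t a b c d (n - 2) = 0 := by
  refine ⟨by simp [hExp, tpoch_zero], fun n hn => ?_⟩
  obtain ⟨m, rfl⟩ : ∃ m, n = m + 2 := ⟨n - 2, by omega⟩
  have hS := hExpNum_succ htt a b c d (m + 1)
  rw [Nat.add_sub_cancel] at hS
  have hP := habcd m
  have hq₁ := one_sub_mul_pow_ne_zero (habcd (m + 1))
  have hq₂ := one_sub_mul_pow_ne_zero (habcd (m + 2))
  rw [show m + 2 - 1 = m + 1 from rfl, show m + 2 - 2 = m from rfl]
  simp only [hExp_eq_inv_mul_hExpNum htt]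
  rw [tpoch_succ _ _ (m + 1), tpoch_succ _ _ m]
  -- Abstracted so that `field_simp` recognises these factors as the nonzero `hq₁`, `hq₂`.
  generalize hy₁ : 1 - a * b * c * d * t ^ m = q₁ at *
  generalize hy₂ : 1 - a * b * c * d * t ^ (m + 1) = q₂ at *
  field_simp
  rw [hS, ← hy₁, ← hy₂]
  ring

/-- the explicit expression `hExp` satisfies the three-term recursion
`(t^(n-1)ab - c⁻¹d⁻¹) h n + (t^(n-1)(a+b) - (c⁻¹+d⁻¹)) h (n-1) + (t^(n-1)-1) h (n-2) = 0`
with initial condition `h 0 = 1`. -/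
theorem statement2 {F : Type*} [Field F] (t a b c d : F)
    (ht : t ≠ 0) (ha : a ≠ 0) (hb : b ≠ 0) (hc : c ≠ 0) (hd : d ≠ 0)
    (htt : ∀ m : ℕ, tpoch t t m ≠ 0)
    (habcd : ∀ n : ℕ, tpoch t (a * b * c * d) n ≠ 0) :
    hExp t a b c d 0 = 1 ∧
      ∀ n : ℕ, 2 ≤ n →
        (t ^ (n - 1) * a * b - c⁻¹ * d⁻¹) * hExp t a b c d n
          + (t ^ (n - 1) * (a + b) - (c⁻¹ + d⁻¹)) * hExp t a b c d (n - 1)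
          + (t ^ (n - 1) - 1) * hExp t a b c d (n - 2) = 0 :=
  statement2_general t a b c d hc hd htt habcd
end
end

section
/- In the Noumi representation acting on Laurent polynomials, the operator T_0-hat = t_0^{1/2} - t_0^{-1/2} ((z - a)(z - b)/z) ∂_0, where ∂_0 f(z) = (f(z) - f(q z^{-1})) / (z - q z^{-1}) and t_0 = -q^{-1} a b, satisfies the quadratic Hecke relation T_0-hat - T_0-hat^{-1} = t_0^{1/2} - t_0^{-1/2}, equivalently (T_0-hat - t_0^{1/2})(T_0-hat + t_0^{-1/2}) = 0. -/
/-!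
With `s z = q / z`, the operator has the shape `T f (z) = u f(z) - c(z) (f(z) - f(s z))` of a
Demazure–Lusztig operator for the involution `s`. Any such operator satisfies
`T² - (u - u⁻¹) T - 1 = 0` at `z` as soon as `c(z) + c(s z) = u + u⁻¹`. For the Noumi coefficient
`c(z) = u⁻¹ (z - a)(z - b) / (z² - q)` this sum is `u⁻¹ (1 - ab/q) = u⁻¹ (1 + u²)`.
-/

noncomputable section

/-- The Noumi-representation boundary operator
`T̂₀ = t₀^{1/2} - t₀^{-1/2} ((z-a)(z-b)/z) ∂₀`, with
`∂₀ f (z) = (f z - f (q z⁻¹)) / (z - q z⁻¹)` and `u = t₀^{1/2}`,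
acting (pointwise) on functions of one variable. -/
def T0hat {F : Type*} [Field F] (q a b u : F) (f : F → F) (z : F) : F :=
  u * f z - u⁻¹ * ((z - a) * (z - b) / z) * ((f z - f (q * z⁻¹)) / (z - q * z⁻¹))

section DemazureLusztig

variable {α F : Type*} [Field F]

def demazureLusztig (u : F) (c : α → F) (s : α → α) (f : α → F) (x : α) : F :=
  u * f x - c x * (f x - f (s x))

theorem demazureLusztig_quadratic {u : F} (hu : u ≠ 0) {c : α → F} {s : α → α} {x : α}
    (hs : s (s x) = x) (hc : c x + c (s x) = u + u⁻¹) (f : α → F) :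
    demazureLusztig u c s (demazureLusztig u c s f) x - (u - u⁻¹) * demazureLusztig u c s f x
      - f x = 0 := by
  simp only [demazureLusztig, hs]
  linear_combination (c x * (f x - f (s x))) * hc + f x * mul_inv_cancel₀ hu

end DemazureLusztig

section Noumi

variable {F : Type*} [Field F]

def noumiCoeff (q a b u z : F) : F :=
  u⁻¹ * ((z - a) * (z - b) / z) / (z - q * z⁻¹)

theorem T0hat_eq_demazureLusztig (q a b u : F) :
    T0hat q a b u = demazureLusztig u (noumiCoeff q a b u) (fun z ↦ q * z⁻¹) := by
  funext f z
  simp only [T0hat, demazureLusztig, noumiCoeff]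
  ring

theorem noumiCoeff_add_noumiCoeff_inv {q a b u z : F} (hq : q ≠ 0)
    (hu : u ^ 2 = -q⁻¹ * a * b) (hu0 : u ≠ 0) (hz : z ≠ 0) (hzq : z ^ 2 ≠ q) :
    noumiCoeff q a b u z + noumiCoeff q a b u (q * z⁻¹) = u + u⁻¹ := by
  have hab : a * b = -(u ^ 2 * q) := by rw [hu]; field_simp
  simp only [noumiCoeff]
  field_simp
  linear_combination (z ^ 2 - q) ^ 2 * hab

end Noumi

theorem statement10_general {F : Type*} [Field F] (q a b u : F)
    (hq : q ≠ 0)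
    (hu : u ^ 2 = -q⁻¹ * a * b) (hu0 : u ≠ 0) :
    ∀ (f : F → F) (z : F), z ≠ 0 → z ^ 2 ≠ q →
      T0hat q a b u (T0hat q a b u f) z - (u - u⁻¹) * T0hat q a b u f z - f z = 0 := by
  intro f z hz hzq
  rw [T0hat_eq_demazureLusztig]
  exact demazureLusztig_quadratic hu0 (by field_simp)
    (noumiCoeff_add_noumiCoeff_inv hq hu hu0 hz hzq) f

/-- `T̂₀` satisfies the quadratic Hecke relation
`T̂₀ - T̂₀⁻¹ = t₀^{1/2} - t₀^{-1/2}`, i.e. `T̂₀² - (t₀^{1/2} - t₀^{-1/2}) T̂₀ - 1 = 0`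
(equivalently `(T̂₀ - t₀^{1/2})(T̂₀ + t₀^{-1/2}) = 0`), where `u² = t₀ = -q⁻¹ab`. -/
theorem statement10 {F : Type*} [Field F] (q a b u : F)
    (hq : q ≠ 0) (ha : a ≠ 0) (hb : b ≠ 0)
    (hu : u ^ 2 = -q⁻¹ * a * b) (hu0 : u ≠ 0) :
    ∀ (f : F → F) (z : F), z ≠ 0 → z ^ 2 ≠ q →
      T0hat q a b u (T0hat q a b u f) z - (u - u⁻¹) * T0hat q a b u f z - f z = 0 :=
  statement10_general q a b u hq hu hu0
end
end

section
/- The braided R-matrices R_i(z) = 1 + ((z-1)/(t^{1/2} z - t^{-1/2})) e_i on (C^3)^{⊗3} (with e_1 acting on factors 1,2 and e_2 on factors 2,3) satisfy the braided Yang-Baxter equation R_1(y z^{-1}) R_2(x z^{-1}) R_1(x y^{-1}) = R_2(x y^{-1}) R_1(x z^{-1}) R_2(y z^{-1}) for all nonzero spectral parameters x, y, z for which the denominators are nonzero. -/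
open Matrix Kronecker

noncomputable section

/-- The matrix of `E^{(i,j)} ∈ End(ℂ³)`, defined by `E^{(i,j)} v_k = δ_{i,k} v_j`
(indices `-1,0,1` are encoded as `0,1,2 : Fin 3`). -/
def Em (i j : Fin 3) : Matrix (Fin 3) (Fin 3) ℂ := Matrix.single j i 1

/-- `t^{(1/2)·sign(j-i)}` written in terms of `s = t^{1/2}`. -/
def sgnPow (s : ℂ) (i j : Fin 3) : ℂ := if i < j then s else if j < i then s⁻¹ else 1

/-- The stochastic Hecke generator
`e = Σ_{i,j} (E^{(i,j)} ⊗ E^{(j,i)} - E^{(j,j)} ⊗ E^{(i,i)}) t^{(1/2) sign(j-i)}`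
on `ℂ³ ⊗ ℂ³`, with `s = t^{1/2}`. -/
def eMat (s : ℂ) : Matrix (Fin 3 × Fin 3) (Fin 3 × Fin 3) ℂ :=
  ∑ i : Fin 3, ∑ j : Fin 3,
    sgnPow s i j • (Em i j ⊗ₖ Em j i - Em j j ⊗ₖ Em i i)

/-- `e₁ = e ⊗ 1` acting on factors 1,2 of `ℂ³ ⊗ ℂ³ ⊗ ℂ³`. -/
def e1 (s : ℂ) : Matrix (Fin 3 × Fin 3 × Fin 3) (Fin 3 × Fin 3 × Fin 3) ℂ :=
  Matrix.of fun p q =>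
    eMat s (p.1, p.2.1) (q.1, q.2.1) * (if p.2.2 = q.2.2 then 1 else 0)

/-- `e₂ = 1 ⊗ e` acting on factors 2,3 of `ℂ³ ⊗ ℂ³ ⊗ ℂ³`. -/
def e2 (s : ℂ) : Matrix (Fin 3 × Fin 3 × Fin 3) (Fin 3 × Fin 3 × Fin 3) ℂ :=
  Matrix.of fun p q =>
    (if p.1 = q.1 then 1 else 0) * eMat s p.2 q.2

/-- `R₁(z) = 1 + ((z-1)/(t^{1/2}z - t^{-1/2})) e₁`. -/
def R1 (s z : ℂ) : Matrix (Fin 3 × Fin 3 × Fin 3) (Fin 3 × Fin 3 × Fin 3) ℂ :=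
  1 + ((z - 1) / (s * z - s⁻¹)) • e1 s

/-- `R₂(z) = 1 + ((z-1)/(t^{1/2}z - t^{-1/2})) e₂`. -/
def R2 (s z : ℂ) : Matrix (Fin 3 × Fin 3 × Fin 3) (Fin 3 × Fin 3 × Fin 3) ℂ :=
  1 + ((z - 1) / (s * z - s⁻¹)) • e2 s

/-!
The Hecke generator factors as `e = D (P - 1)`, with `P` the flip of the two tensor factors and
`D` the diagonal matrix with entry `t^{(1/2) sign(a - b)}` at `v_a ⊗ v_b`. From this one reads off
the Hecke relations `e_i² = -(t^{1/2} + t^{-1/2}) e_i` and the braid relation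
`e₁ e₂ e₁ - e₁ = e₂ e₁ e₂ - e₂`. In any algebra, these relations reduce the Yang–Baxter equation
for `1 + a e₁`, `1 + b e₂`, ... to the single scalar identity `a + c - q a c + a b c = b`, which the
Baxterized weight `f(u) = (u - 1)/(t^{1/2} u - t^{-1/2})` satisfies at `a = f(u)`, `b = f(u v)`,
`c = f(v)`.
-/

section HeckeAlgebra

variable {K A : Type*} [CommRing K] [Ring A] [Algebra K A]

theorem yangBaxter_of_hecke {e₁ e₂ : A} {q a b c : K}
    (he₁ : e₁ * e₁ = -q • e₁) (he₂ : e₂ * e₂ = -q • e₂)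
    (hbraid : e₁ * e₂ * e₁ - e₁ = e₂ * e₁ * e₂ - e₂)
    (habc : a + c - q * a * c + a * b * c = b) :
    (1 + a • e₁) * (1 + b • e₂) * (1 + c • e₁) = (1 + c • e₂) * (1 + b • e₁) * (1 + a • e₂) := by
  have h121 : e₁ * e₂ * e₁ = e₂ * e₁ * e₂ - e₂ + e₁ := by rw [← hbraid]; abel
  have hdiff : (1 + a • e₁) * (1 + b • e₂) * (1 + c • e₁)
      - (1 + c • e₂) * (1 + b • e₁) * (1 + a • e₂)
      = (a + c - q * a * c + a * b * c - b) • (e₁ - e₂) := by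
    simp only [add_mul, mul_add, one_mul, mul_one, smul_mul_assoc, mul_smul_comm]
    rw [he₁, he₂, h121]
    match_scalars <;> ring
  rw [← sub_eq_zero, hdiff, sub_eq_zero.mpr habc, zero_smul]

end HeckeAlgebra

section BaxterWeight

variable {K : Type*} [Field K] {s u v : K}

def baxterWeight (s u : K) : K := (u - 1) / (s * u - s⁻¹)

lemma sq_mul_sub_one_ne_zero (hs : s ≠ 0) (hu : s * u - s⁻¹ ≠ 0) : s ^ 2 * u - 1 ≠ 0 := by
  contrapose! hu
  field_simp
  linear_combination hu

lemma baxterWeight_eq (hs : s ≠ 0) : baxterWeight s u = s * (u - 1) / (s ^ 2 * u - 1) := by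
  rw [baxterWeight, ← mul_div_mul_left _ _ hs]
  congr 1
  field_simp

theorem baxterWeight_yangBaxter (hs : s ≠ 0)
    (hu : s * u - s⁻¹ ≠ 0) (hv : s * v - s⁻¹ ≠ 0) (huv : s * (u * v) - s⁻¹ ≠ 0) :
    baxterWeight s u + baxterWeight s v - (s + s⁻¹) * baxterWeight s u * baxterWeight s v
      + baxterWeight s u * baxterWeight s (u * v) * baxterWeight s v
      = baxterWeight s (u * v) := by
  have hu' := sq_mul_sub_one_ne_zero hs hu
  have hv' := sq_mul_sub_one_ne_zero hs hv
  have huv' : s ^ 2 * u * v - 1 ≠ 0 := by simpa only [mul_assoc] using sq_mul_sub_one_ne_zero hs huv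
  simp only [baxterWeight_eq hs]
  field_simp
  ring

end BaxterWeight

section HeckeGenerator

variable (s : ℂ)

lemma sgnPow_add_sgnPow_swap {a b : Fin 3} (hab : a ≠ b) :
    sgnPow s a b + sgnPow s b a = s + s⁻¹ := by
  rcases hab.lt_or_gt with h | h
  · simp [sgnPow, h, h.not_gt]
  · simp [sgnPow, h, h.not_gt, add_comm]

lemma eMat_apply (a b : Fin 3) (q : Fin 3 × Fin 3) :
    eMat s (a, b) q = sgnPow s b a * ((1 : Matrix (Fin 3 × Fin 3) (Fin 3 × Fin 3) ℂ) (b, a) q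
      - (1 : Matrix (Fin 3 × Fin 3) (Fin 3 × Fin 3) ℂ) (a, b) q) := by
  obtain ⟨c, d⟩ := q
  simp only [eMat, Fin.sum_univ_three, Matrix.add_apply, Matrix.sum_apply,
    Matrix.smul_apply, Matrix.sub_apply, kroneckerMap_apply, Em,
    Matrix.single_apply, Matrix.one_apply, Prod.mk.injEq, smul_eq_mul]
  fin_cases a <;> fin_cases b <;> fin_cases c <;> fin_cases d <;> simp [sgnPow]

lemma eMat_mul_apply {n : Type*} (M : Matrix (Fin 3 × Fin 3) n ℂ) (a b : Fin 3) (q : n) :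
    (eMat s * M) (a, b) q = sgnPow s b a * (M (b, a) q - M (a, b) q) := by
  simp only [Matrix.mul_apply, eMat_apply, mul_assoc, ← Finset.mul_sum, sub_mul,
    Finset.sum_sub_distrib]
  simp [Matrix.one_apply]

lemma e1_mul_apply {n : Type*} (M : Matrix (Fin 3 × Fin 3 × Fin 3) n ℂ)
    (a b c : Fin 3) (q : n) :
    (e1 s * M) (a, b, c) q = sgnPow s b a * (M (b, a, c) q - M (a, b, c) q) := by
  have h := eMat_mul_apply s (Matrix.of fun (p : Fin 3 × Fin 3) q => M (p.1, p.2, c) q) a b q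
  rw [Matrix.of_apply, Matrix.of_apply] at h
  rw [← h]
  simp [Matrix.mul_apply, e1, Fintype.sum_prod_type]

lemma e2_mul_apply {n : Type*} (M : Matrix (Fin 3 × Fin 3 × Fin 3) n ℂ)
    (a b c : Fin 3) (q : n) :
    (e2 s * M) (a, b, c) q = sgnPow s c b * (M (a, c, b) q - M (a, b, c) q) := by
  have h := eMat_mul_apply s (Matrix.of fun (p : Fin 3 × Fin 3) q => M (a, p) q) b c q
  rw [Matrix.of_apply, Matrix.of_apply] at h
  rw [← h]
  simp [Matrix.mul_apply, e2, Fintype.sum_prod_type]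

lemma e1_apply (a b c : Fin 3) (q : Fin 3 × Fin 3 × Fin 3) :
    e1 s (a, b, c) q = sgnPow s b a * ((1 : Matrix (Fin 3 × Fin 3 × Fin 3) _ ℂ) (b, a, c) q
      - (1 : Matrix (Fin 3 × Fin 3 × Fin 3) _ ℂ) (a, b, c) q) := by
  simpa using e1_mul_apply s 1 a b c q

lemma e2_apply (a b c : Fin 3) (q : Fin 3 × Fin 3 × Fin 3) :
    e2 s (a, b, c) q = sgnPow s c b * ((1 : Matrix (Fin 3 × Fin 3 × Fin 3) _ ℂ) (a, c, b) q
      - (1 : Matrix (Fin 3 × Fin 3 × Fin 3) _ ℂ) (a, b, c) q) := by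
  simpa using e2_mul_apply s 1 a b c q

lemma e1_mul_self : e1 s * e1 s = -(s + s⁻¹) • e1 s := by
  ext ⟨a, b, c⟩ q
  rw [e1_mul_apply, Matrix.smul_apply, e1_apply, e1_apply, smul_eq_mul]
  by_cases hab : a = b
  · subst hab
    simp
  · rw [← sgnPow_add_sgnPow_swap s hab]
    ring

lemma e2_mul_self : e2 s * e2 s = -(s + s⁻¹) • e2 s := by
  ext ⟨a, b, c⟩ q
  rw [e2_mul_apply, Matrix.smul_apply, e2_apply, e2_apply, smul_eq_mul]
  by_cases hbc : b = c
  · subst hbc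
    simp
  · rw [← sgnPow_add_sgnPow_swap s hbc]
    ring

lemma e1_mul_e2_mul_e1_sub_e1 (hs : s ≠ 0) :
    e1 s * e2 s * e1 s - e1 s = e2 s * e1 s * e2 s - e2 s := by
  ext ⟨a, b, c⟩ q
  simp only [Matrix.sub_apply, Matrix.mul_assoc, e1_mul_apply, e2_mul_apply, e1_apply, e2_apply]
  fin_cases a <;> fin_cases b <;> fin_cases c <;> simp [sgnPow] <;> field_simp <;> ring

end HeckeGenerator

theorem statement16_general (s x y z : ℂ) (hs0 : s ≠ 0) (hy : y ≠ 0)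
    (h1 : s * (y * z⁻¹) - s⁻¹ ≠ 0) (h2 : s * (x * z⁻¹) - s⁻¹ ≠ 0)
    (h3 : s * (x * y⁻¹) - s⁻¹ ≠ 0) :
    R1 s (y * z⁻¹) * R2 s (x * z⁻¹) * R1 s (x * y⁻¹)
      = R2 s (x * y⁻¹) * R1 s (x * z⁻¹) * R2 s (y * z⁻¹) := by
  have hxz : x * z⁻¹ = y * z⁻¹ * (x * y⁻¹) := by field_simp
  rw [hxz] at h2 ⊢
  exact yangBaxter_of_hecke (e1_mul_self s) (e2_mul_self s) (e1_mul_e2_mul_e1_sub_e1 s hs0)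
    (baxterWeight_yangBaxter hs0 h1 h3 h2)

/-- the braided Yang-Baxter equation
`R₁(yz⁻¹) R₂(xz⁻¹) R₁(xy⁻¹) = R₂(xy⁻¹) R₁(xz⁻¹) R₂(yz⁻¹)`. -/
theorem statement16 (s t x y z : ℂ) (hs : s ^ 2 = t) (hs0 : s ≠ 0) (ht : t ≠ 1)
    (hx : x ≠ 0) (hy : y ≠ 0) (hz : z ≠ 0)
    (h1 : s * (y * z⁻¹) - s⁻¹ ≠ 0) (h2 : s * (x * z⁻¹) - s⁻¹ ≠ 0)
    (h3 : s * (x * y⁻¹) - s⁻¹ ≠ 0) :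
    R1 s (y * z⁻¹) * R2 s (x * z⁻¹) * R1 s (x * y⁻¹)
      = R2 s (x * y⁻¹) * R1 s (x * z⁻¹) * R2 s (y * z⁻¹) :=
  statement16_general s x y z hs0 hy h1 h2 h3
end
end

section
/- The boundary K-matrix K_L(z|a,b) = 1 + ((z^2-1)/((z-a)(z-b))) M, where M is the 3×3 matrix with rows (-1, 0, -ab), (0, 0, 0), (1, 0, ab) in the basis (v_{-1}, v_0, v_1), satisfies the unitarity condition K_L(z) K_L(z^{-1}) = 1 for all z for which (z-a)(z-b) ≠ 0 and (z^{-1}-a)(z^{-1}-b) ≠ 0. -/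
/-! Since `M² = (ab - 1) M`, we have `(1 + c M)(1 + d M) = 1 + (c + d + (ab - 1) c d) M`, so
unitarity reduces to the vanishing of that scalar for `c = f(z)`, `d = f(z⁻¹)`, where
`f(z) = (z² - 1)/((z - a)(z - b))` and `f(z⁻¹) = (1 - z²)/((1 - az)(1 - bz))`. This rests on
`(1 - az)(1 - bz) - (z - a)(z - b) = (ab - 1)(z² - 1)`. -/

noncomputable section

/-- The boundary K-matrix
`K_L(z|a,b) = 1 + ((z²-1)/((z-a)(z-b))) M`, with `M` the matrix with rows
`(-1,0,-ab)`, `(0,0,0)`, `(1,0,ab)` in the basis `(v₋₁, v₀, v₁)`. -/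
def KL (a b z : ℂ) : Matrix (Fin 3) (Fin 3) ℂ :=
  1 + ((z ^ 2 - 1) / ((z - a) * (z - b))) •
    !![-1, 0, -(a * b); 0, 0, 0; 1, 0, a * b]

theorem one_add_smul_mul_one_add_smul {R A : Type*} [CommSemiring R] [Semiring A] [Algebra R A]
    {m : A} {t : R} (hm : m * m = t • m) (c d : R) :
    (1 + c • m) * (1 + d • m) = 1 + (c + d + c * d * t) • m := by
  rw [mul_add, add_mul, add_mul, one_mul, mul_one, one_mul, smul_mul_smul_comm, hm, smul_smul]
  simp only [add_smul]
  abel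

section BoundaryK

variable {K : Type*} [Field K]

def boundaryKMatrix (a b : K) : Matrix (Fin 3) (Fin 3) K :=
  !![-1, 0, -(a * b); 0, 0, 0; 1, 0, a * b]

theorem boundaryKMatrix_mul_self (a b : K) :
    boundaryKMatrix a b * boundaryKMatrix a b = (a * b - 1) • boundaryKMatrix a b := by
  ext i j
  fin_cases i <;> fin_cases j <;>
    simp [boundaryKMatrix, Matrix.mul_apply, Fin.sum_univ_three] <;> ring

def boundaryKCoeff (a b z : K) : K := (z ^ 2 - 1) / ((z - a) * (z - b))

theorem boundaryKCoeff_add_boundaryKCoeff_inv {a b z : K} (hz : z ≠ 0)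
    (h1 : (z - a) * (z - b) ≠ 0) (h2 : (z⁻¹ - a) * (z⁻¹ - b) ≠ 0) :
    boundaryKCoeff a b z + boundaryKCoeff a b z⁻¹ +
      boundaryKCoeff a b z * boundaryKCoeff a b z⁻¹ * (a * b - 1) = 0 := by
  have h2' : (1 - a * z) * (1 - b * z) ≠ 0 := by
    convert mul_ne_zero (pow_ne_zero 2 hz) h2 using 1
    field_simp
  have hcoeff_inv : boundaryKCoeff a b z⁻¹ = (1 - z ^ 2) / ((1 - a * z) * (1 - b * z)) := by
    rw [boundaryKCoeff, div_eq_div_iff h2 h2']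
    field_simp
  rw [hcoeff_inv, boundaryKCoeff, div_add_div _ _ h1 h2', div_mul_div_comm, div_mul_eq_mul_div,
    ← add_div, div_eq_zero_iff]
  left
  ring

end BoundaryK

theorem statement17_general (a b z : ℂ) (hz : z ≠ 0)
    (h1 : (z - a) * (z - b) ≠ 0) (h2 : (z⁻¹ - a) * (z⁻¹ - b) ≠ 0) :
    KL a b z * KL a b z⁻¹ = 1 := by
  change (1 + boundaryKCoeff a b z • boundaryKMatrix a b) *
    (1 + boundaryKCoeff a b z⁻¹ • boundaryKMatrix a b) = 1
  rw [one_add_smul_mul_one_add_smul (boundaryKMatrix_mul_self a b),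
    boundaryKCoeff_add_boundaryKCoeff_inv hz h1 h2, zero_smul, add_zero]

/-- the boundary K-matrix satisfies the unitarity condition
`K_L(z) K_L(z⁻¹) = 1`. -/
theorem statement17 (a b z : ℂ) (ha : a ≠ 0) (hb : b ≠ 0) (hz : z ≠ 0)
    (h1 : (z - a) * (z - b) ≠ 0) (h2 : (z⁻¹ - a) * (z⁻¹ - b) ≠ 0) :
    KL a b z * KL a b z⁻¹ = 1 :=
  statement17_general a b z hz h1 h2
end
end

section
/- For the coefficients h_n satisfying the three-term recursion (t^{n-1}ab - c^{-1}d^{-1}) h_n + (t^{n-1}(a+b) - (c^{-1}+d^{-1})) h_{n-1} + (t^{n-1}-1) h_{n-2} = 0 with h_0 = 1, the following contiguous relation holds: h_{n+1}(a,b,c,d) + c h_n(a,b,c,d) = -((1-ac)(1-bc)d/(1-abcd)) h_n(a,b,tc,d). -/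
/-!
Multiplying the recursion by `c d` turns it into a linear three-term relation `R_c`
(`IsRecSol t a b c d`) whose instance at `n = 0` is exactly the initial value of `h 1`. The key identity is that if `u`
solves `R_c` then `n ↦ u (n + 1) + c u n` solves `R_{tc}`: its relation at `n` is the relation
of `u` at `n + 1` plus `t c` times the one at `n`. Hence
`(1 - abcd) (h (n + 1) + c h n) + (1 - ac)(1 - bc) d g n` solves `R_{tc}`; it vanishes at `0`, and
the leading coefficients `t ^ (n + 1) abcd - 1` of `R_{tc}` are nonzero, so it vanishes identically.
-/

section

variable {F : Type*} [Field F]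

def recRel (t a b c d : F) (n : ℕ) (x y z : F) : F :=
  (t ^ n * a * b * c * d - 1) * x + (t ^ n * c * d * (a + b) - (c + d)) * y
    + (t ^ n - 1) * (c * d) * z

/-- At `n = 0` the last coefficient vanishes, so the truncated index `n - 1 = 0` is harmless. -/
def IsRecSol (t a b c d : F) (u : ℕ → F) : Prop :=
  ∀ n, recRel t a b c d n (u (n + 1)) (u n) (u (n - 1)) = 0

variable {t a b c d : F}

theorem isRecSol_of_rec (hc : c ≠ 0) (hd : d ≠ 0) (hD : a * b * c * d ≠ 1) {u : ℕ → F}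
    (h0 : u 0 = 1) (h1 : u 1 = (a + b - c⁻¹ - d⁻¹) / (c⁻¹ * d⁻¹ - a * b))
    (hrec : ∀ n : ℕ, 2 ≤ n →
      (t ^ (n - 1) * a * b - c⁻¹ * d⁻¹) * u n
        + (t ^ (n - 1) * (a + b) - (c⁻¹ + d⁻¹)) * u (n - 1)
        + (t ^ (n - 1) - 1) * u (n - 2) = 0) :
    IsRecSol t a b c d u := by
  rintro (_ | n)
  · have hden : c⁻¹ * d⁻¹ - a * b ≠ 0 := by
      contrapose! hD
      field_simp at hD
      linear_combination -hD
    rw [h1, h0]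
    unfold recRel
    field_simp
    ring
  · have e := hrec (n + 2) (by omega)
    simp only [show n + 2 - 1 = n + 1 from rfl, show n + 2 - 2 = n from rfl] at e
    unfold recRel
    simp only [Nat.add_sub_cancel]
    field_simp at e
    linear_combination e

namespace IsRecSol

theorem contiguous {u : ℕ → F} (hu : IsRecSol t a b c d u) :
    IsRecSol t a b (t * c) d (fun n => u (n + 1) + c * u n) := by
  rintro (_ | n)
  · have e0 := hu 0
    have e1 := hu 1
    unfold recRel at e0 e1 ⊢
    simp only [pow_zero, pow_one, sub_self, zero_mul, add_zero, one_mul] at e0 e1 ⊢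
    linear_combination e1 + t * c * e0
  · have e0 := hu (n + 1)
    have e1 := hu (n + 2)
    unfold recRel at e0 e1 ⊢
    simp only [Nat.add_sub_cancel, show n + 2 - 1 = n + 1 from rfl] at e0 e1 ⊢
    linear_combination e1 + t * c * e0

theorem linear_comb {u v : ℕ → F} (hu : IsRecSol t a b c d u) (hv : IsRecSol t a b c d v)
    (α β : F) : IsRecSol t a b c d (fun n => α * u n + β * v n) := by
  intro n
  have eu := hu n
  have ev := hv n
  unfold recRel at eu ev ⊢
  linear_combination α * eu + β * ev

theorem eq_zero {u : ℕ → F} (hu : IsRecSol t a b c d u)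
    (hlead : ∀ n, t ^ n * a * b * c * d - 1 ≠ 0) (h0 : u 0 = 0) : ∀ n, u n = 0 := by
  intro n
  induction n using Nat.strong_induction_on with
  | _ n ih =>
    rcases n with _ | n
    · exact h0
    · have e := hu n
      unfold recRel at e
      rw [ih n (by omega), ih (n - 1) (by omega)] at e
      simpa [hlead n] using e

end IsRecSol

end

theorem statement19_general {F : Type*} [Field F] (t a b c d : F)
    (ht : t ≠ 0) (hc : c ≠ 0) (hd : d ≠ 0)
    (habcd : 1 - a * b * c * d ≠ 0)
    (hden : ∀ n : ℕ, 1 ≤ n → t ^ (n - 1) * a * b - c⁻¹ * d⁻¹ ≠ 0)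
    (h g : ℕ → F)
    (h0 : h 0 = 1)
    (h1 : h 1 = (a + b - c⁻¹ - d⁻¹) / (c⁻¹ * d⁻¹ - a * b))
    (hrec : ∀ n : ℕ, 2 ≤ n →
      (t ^ (n - 1) * a * b - c⁻¹ * d⁻¹) * h n
        + (t ^ (n - 1) * (a + b) - (c⁻¹ + d⁻¹)) * h (n - 1)
        + (t ^ (n - 1) - 1) * h (n - 2) = 0)
    (g0 : g 0 = 1)
    (g1 : g 1 = (a + b - (t * c)⁻¹ - d⁻¹) / ((t * c)⁻¹ * d⁻¹ - a * b))
    (grec : ∀ n : ℕ, 2 ≤ n →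
      (t ^ (n - 1) * a * b - (t * c)⁻¹ * d⁻¹) * g n
        + (t ^ (n - 1) * (a + b) - ((t * c)⁻¹ + d⁻¹)) * g (n - 1)
        + (t ^ (n - 1) - 1) * g (n - 2) = 0) :
    ∀ n : ℕ,
      h (n + 1) + c * h n
        = -((1 - a * c) * (1 - b * c) * d / (1 - a * b * c * d)) * g n := by
  have hlead : ∀ n, t ^ n * a * b * (t * c) * d - 1 ≠ 0 := fun n => by
    have hn := hden (n + 2) (by omega)
    rw [show n + 2 - 1 = n + 1 from rfl] at hn
    contrapose! hn
    field_simp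
    linear_combination hn
  have hsol : IsRecSol t a b c d h := isRecSol_of_rec hc hd (sub_ne_zero.1 habcd).symm h0 h1 hrec
  have gsol : IsRecSol t a b (t * c) d g :=
    isRecSol_of_rec (mul_ne_zero ht hc) hd (sub_ne_zero.1 (by simpa using hlead 0)) g0 g1 grec
  have herr := (hsol.contiguous.linear_comb gsol (1 - a * b * c * d)
    ((1 - a * c) * (1 - b * c) * d)).eq_zero hlead (by
      have e := hsol 0
      simp only [recRel, pow_zero, h0, g0] at e ⊢
      linear_combination -e)
  intro n
  rw [neg_mul, div_mul_eq_mul_div, ← neg_div, eq_div_iff habcd]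
  linear_combination herr n

/-- For the coefficients `h n` (parameters `(a,b,c,d)`) and `g n`
(parameters `(a,b,tc,d)`) satisfying the three-term recursion
`(t^(n-1)ab - c⁻¹d⁻¹) h n + (t^(n-1)(a+b) - (c⁻¹+d⁻¹)) h (n-1) + (t^(n-1)-1) h (n-2) = 0`
with `h 0 = 1`, the contiguous relation
`h_{n+1}(a,b,c,d) + c h_n(a,b,c,d) = -((1-ac)(1-bc)d/(1-abcd)) h_n(a,b,tc,d)` holds. -/
theorem statement19 {F : Type*} [Field F] (t a b c d : F)
    (ht : t ≠ 0) (ha : a ≠ 0) (hb : b ≠ 0) (hc : c ≠ 0) (hd : d ≠ 0)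
    (habcd : 1 - a * b * c * d ≠ 0)
    (hden : ∀ n : ℕ, 1 ≤ n → t ^ (n - 1) * a * b - c⁻¹ * d⁻¹ ≠ 0)
    (hden' : ∀ n : ℕ, 1 ≤ n → t ^ (n - 1) * a * b - (t * c)⁻¹ * d⁻¹ ≠ 0)
    (h g : ℕ → F)
    (h0 : h 0 = 1)
    (h1 : h 1 = (a + b - c⁻¹ - d⁻¹) / (c⁻¹ * d⁻¹ - a * b))
    (hrec : ∀ n : ℕ, 2 ≤ n →
      (t ^ (n - 1) * a * b - c⁻¹ * d⁻¹) * h n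
        + (t ^ (n - 1) * (a + b) - (c⁻¹ + d⁻¹)) * h (n - 1)
        + (t ^ (n - 1) - 1) * h (n - 2) = 0)
    (g0 : g 0 = 1)
    (g1 : g 1 = (a + b - (t * c)⁻¹ - d⁻¹) / ((t * c)⁻¹ * d⁻¹ - a * b))
    (grec : ∀ n : ℕ, 2 ≤ n →
      (t ^ (n - 1) * a * b - (t * c)⁻¹ * d⁻¹) * g n
        + (t ^ (n - 1) * (a + b) - ((t * c)⁻¹ + d⁻¹)) * g (n - 1)
        + (t ^ (n - 1) - 1) * g (n - 2) = 0) :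
    ∀ n : ℕ,
      h (n + 1) + c * h n
        = -((1 - a * c) * (1 - b * c) * d / (1 - a * b * c * d)) * g n :=
  statement19_general t a b c d ht hc hd habcd hden h g h0 h1 hrec g0 g1 grec
end
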